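/- arXiv:2404.09409 — 3 statements merged into one kernel-verified Lean document; each statement's English description precedes it below -/
import Mathlib

section
/- Consider the generalized short-range spin glass model with Hamiltonian H_J and inverse temperature 0 ≤ β < ∞. For any a ∈ {−1,1}^N, any vertices i, j ∈ [N], and any n ∈ ℤ_+^E, one has E[h_n(J)⟨σ_i σ_j⟩] = I_n(a) · E[h_n(J)⟨σ_i σ_j⟩], where a_e = ∏_{v∈e} a_v and I_n(a) = a_i a_j ∏_{e∈E(n)} a_e^{n_e}. In particular, if I_n(a) = −1 for some a ∈ {−1,1}^N, then the Fourier–Hermite coefficient E[h_n(J)⟨σ_i σ_j⟩] = 0. -/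
/-!
Gauge symmetry. Replacing each coupling `J_e` by `a_e J_e` preserves the law of `J`, and since
every `ρ_p` is odd it turns `H_J(σ)` into `H_J(aσ)`. The substitution `σ ↦ aσ` in the Gibbs sums
then multiplies `⟨σ_i σ_j⟩` by `a_i a_j`, while the parity `h_m(-x) = (-1)^m h_m(x)` multiplies
`h_n(J)` by `∏_e a_e^{n_e}`.
-/

open MeasureTheory ProbabilityTheory Real Finset

noncomputable section

/-! ### Basic objects: spins, Hermite polynomials, Gaussian measures -/

/-- The `±1` spin value attached to a Boolean. -/
def spin (b : Bool) : ℝ := if b then 1 else -1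

/-- Normalized Hermite polynomial `h_m = He_m / √(m!)`,
orthonormal w.r.t. the standard Gaussian measure. -/
def hermiteFn (m : ℕ) (x : ℝ) : ℝ :=
  Polynomial.aeval x (Polynomial.hermite m) / Real.sqrt (Nat.factorial m)

/-- The law of a family of i.i.d. standard Gaussians over a finite index set. -/
def gaussianPi (ι : Type*) [Fintype ι] : Measure (ι → ℝ) :=
  Measure.pi fun _ => gaussianReal 0 1

instance (ι : Type*) [Fintype ι] : IsProbabilityMeasure (gaussianPi ι) := by
  unfold gaussianPi; infer_instance

/-- Tensorized normalized Hermite polynomial `h_n(x) = ∏_e h_{n_e}(x_e)`. -/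
def hermiteProd {ι : Type*} [Fintype ι] (n : ι → ℕ) (x : ι → ℝ) : ℝ :=
  ∏ e, hermiteFn (n e) (x e)

/-- Continuous perturbation `J(t) = e^{-t} J + √(1-e^{-2t}) J'` of the disorder. -/
def contPerturb {ι : Type*} (t : ℝ) (J J' : ι → ℝ) : ι → ℝ := fun e =>
  Real.exp (-t) * J e + Real.sqrt (1 - Real.exp (-2 * t)) * J' e

/-- Discrete perturbation `J(t)_e = B_e J_e + (1-B_e) J'_e` of the disorder. -/
def discPerturb {ι : Type*} (J J' : ι → ℝ) (B : ι → Bool) : ι → ℝ := fun e =>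
  if B e then J e else J' e

/-- Bernoulli measure on `Bool` with success probability `p`. -/
def berBool (p : ℝ) : Measure Bool :=
  ENNReal.ofReal p • Measure.dirac true + ENNReal.ofReal (1 - p) • Measure.dirac false

instance (p : ℝ) : IsFiniteMeasure (berBool p) := by
  constructor
  simp only [berBool, Measure.coe_add, Pi.add_apply, Measure.smul_apply, smul_eq_mul,
    Measure.dirac_apply' _ MeasurableSet.univ, Set.indicator_univ, Pi.one_apply, mul_one]
  exact ENNReal.add_lt_top.mpr ⟨ENNReal.ofReal_lt_top, ENNReal.ofReal_lt_top⟩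

/-- Product Gaussian measure for a pair `(J, J')` of independent disorders. -/
def pairGauss (ι : Type*) [Fintype ι] : Measure ((ι → ℝ) × (ι → ℝ)) :=
  (gaussianPi ι).prod (gaussianPi ι)

/-- Product Gaussian measure for a triple of independent disorders. -/
def tripleGauss (ι : Type*) [Fintype ι] : Measure ((ι → ℝ) × (ι → ℝ) × (ι → ℝ)) :=
  (gaussianPi ι).prod ((gaussianPi ι).prod (gaussianPi ι))

/-- Law of `(J, J', B)`: two independent Gaussian disorders together with i.i.d.
Bernoulli(`p`) variables. -/
def tripleGaussBer (ι : Type*) [Fintype ι] (p : ℝ) :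
    Measure ((ι → ℝ) × (ι → ℝ) × (ι → Bool)) :=
  (gaussianPi ι).prod ((gaussianPi ι).prod (Measure.pi fun _ => berBool p))

/-! ### Spin models on hypergraphs -/

variable {N : ℕ}

/-- `σ_e = ∏_{v ∈ e} σ_v`. -/
def sigEdge (σ : Fin N → Bool) (e : Finset (Fin N)) : ℝ := ∏ v ∈ e, spin (σ v)

/-- Hamiltonian `H_J(σ) = Σ_e ρ_{|e|}(J_e) σ_e` of the short-range model. -/
def ham (Edges : Finset (Finset (Fin N))) (ρ : ℕ → ℝ → ℝ)
    (J : Finset (Fin N) → ℝ) (σ : Fin N → Bool) : ℝ :=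
  ∑ e ∈ Edges, ρ e.card (J e) * sigEdge σ e

/-- Gibbs average of an observable `f` for the Hamiltonian `H` at inverse temperature `β`. -/
def gibbs (β : ℝ) (H : (Fin N → Bool) → ℝ) (f : (Fin N → Bool) → ℝ) : ℝ :=
  (∑ σ : Fin N → Bool, f σ * Real.exp (β * H σ)) / ∑ σ : Fin N → Bool, Real.exp (β * H σ)

/-- Gibbs average of a two-replica observable `f(σ,τ)` where `σ, τ` are sampled from the
product of the Gibbs measures of the Hamiltonians `H₁`, `H₂`. -/
def gibbs2 (β : ℝ) (H₁ H₂ : (Fin N → Bool) → ℝ)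
    (f : (Fin N → Bool) → (Fin N → Bool) → ℝ) : ℝ :=
  (∑ σ : Fin N → Bool, ∑ τ : Fin N → Bool, f σ τ * Real.exp (β * H₁ σ + β * H₂ τ)) /
    ∑ σ : Fin N → Bool, ∑ τ : Fin N → Bool, Real.exp (β * H₁ σ + β * H₂ τ)

/-- Site overlap `R(σ,τ) = N⁻¹ Σ_i σ_i τ_i`. -/
def overlap (σ τ : Fin N → Bool) : ℝ := (∑ i, spin (σ i) * spin (τ i)) / N

/-- Fourier–Hermite coefficient `φ̂_{ij}(n) = E[⟨σ_i σ_j⟩ h_n(J)]` of the two-point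
correlation function. -/
def twoPointCoeff (Edges : Finset (Finset (Fin N))) (ρ : ℕ → ℝ → ℝ) (β : ℝ)
    (i j : Fin N) (n : Finset (Fin N) → ℕ) : ℝ :=
  ∫ ω, gibbs β (ham Edges ρ ω) (fun σ => spin (σ i) * spin (σ j)) * hermiteProd n ω
    ∂gaussianPi (Finset (Fin N))

/-- `E(n) = {e : n_e > 0}`. -/
def Esupp (n : Finset (Fin N) → ℕ) : Finset (Finset (Fin N)) :=
  Finset.univ.filter fun e => n e ≠ 0

/-- `V(n)`: the vertices covered by `E(n)`. -/
def Vsupp (n : Finset (Fin N) → ℕ) : Finset (Fin N) :=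
  (Esupp n).biUnion id

/-- Disorder-averaged two-replica observable under the continuous perturbation:
`E ⟨f(σ,τ)⟩_t` with `σ ~ G_J`, `τ ~ G_{J(t)}`. -/
def contExp (Edges : Finset (Finset (Fin N))) (ρ : ℕ → ℝ → ℝ) (β t : ℝ)
    (f : (Fin N → Bool) → (Fin N → Bool) → ℝ) : ℝ :=
  ∫ ω : (Finset (Fin N) → ℝ) × (Finset (Fin N) → ℝ),
    gibbs2 β (ham Edges ρ ω.1) (ham Edges ρ (contPerturb t ω.1 ω.2)) f
    ∂pairGauss (Finset (Fin N))

/-- Disorder-averaged two-replica observable under the discrete perturbation. -/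
def discExp (Edges : Finset (Finset (Fin N))) (ρ : ℕ → ℝ → ℝ) (β t : ℝ)
    (f : (Fin N → Bool) → (Fin N → Bool) → ℝ) : ℝ :=
  ∫ ω : (Finset (Fin N) → ℝ) × (Finset (Fin N) → ℝ) × (Finset (Fin N) → Bool),
    gibbs2 β (ham Edges ρ ω.1) (ham Edges ρ (discPerturb ω.1 ω.2.1 ω.2.2)) f
    ∂tripleGaussBer (Finset (Fin N)) (Real.exp (-t))

/-! ### Berge paths, distance, balls, cycles -/

/-- `(vs, es)` is a Berge path of length `ℓ` from `v` to `w` in the hypergraph `Edges`. -/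
def IsBergePath (Edges : Finset (Finset (Fin N))) (ℓ : ℕ)
    (vs : Fin (ℓ + 1) → Fin N) (es : Fin ℓ → Finset (Fin N)) (v w : Fin N) : Prop :=
  Function.Injective vs ∧ Function.Injective es ∧ (∀ k, es k ∈ Edges) ∧
    vs 0 = v ∧ vs (Fin.last ℓ) = w ∧
    ∀ k : Fin ℓ, vs k.castSucc ∈ es k ∧ vs k.succ ∈ es k

/-- Hypergraph (Berge) distance between two vertices, `∞` if there is no path. -/
def hdist (Edges : Finset (Finset (Fin N))) (v w : Fin N) : ℕ∞ :=
  sInf {d : ℕ∞ | ∃ (ℓ : ℕ) (vs : Fin (ℓ + 1) → Fin N) (es : Fin ℓ → Finset (Fin N)),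
    IsBergePath Edges ℓ vs es v w ∧ d = (ℓ : ℕ∞)}

open scoped Classical in
/-- The closed ball `B_r(v)` in the hypergraph distance. -/
def hball (Edges : Finset (Finset (Fin N))) (v : Fin N) (r : ℕ) : Finset (Fin N) :=
  Finset.univ.filter fun w => hdist Edges v w ≤ (r : ℕ∞)

/-- The hypergraph `Edges` contains a Berge cycle. -/
def HasBergeCycle (Edges : Finset (Finset (Fin N))) : Prop :=
  ∃ (ℓ : ℕ) (vs : Fin ℓ → Fin N) (es : Fin ℓ → Finset (Fin N)),
    2 ≤ ℓ ∧ Function.Injective vs ∧ Function.Injective es ∧ (∀ k, es k ∈ Edges) ∧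
      ∀ k : Fin ℓ, vs k ∈ es k ∧ vs (finRotate ℓ k) ∈ es k

/-- `min(d, c)` where `d ∈ ℕ∞` and `c ∈ ℝ` (equal to `c` if `d = ∞`). -/
def truncMin (d : ℕ∞) (c : ℝ) : ℝ :=
  if d = ⊤ then c else min (d.toNat : ℝ) c

/-! ### The diluted mixed p-spin random hypergraph -/

/-- Probability that a given hyperedge is present in the diluted model. -/
def edgeProb (α : ℕ → ℝ) (Δ N : ℕ) (e : Finset (Fin N)) : ℝ :=
  if 2 ≤ e.card ∧ e.card ≤ Δ then α e.card * N / (N.choose e.card) else 0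

/-- The law of the diluted mixed `p`-spin random hypergraph: each hyperedge `e` with
`2 ≤ |e| ≤ Δ` is present independently with probability `α_{|e|} N / C(N,|e|)`. -/
def graphMeasure (α : ℕ → ℝ) (Δ N : ℕ) : Measure (Finset (Fin N) → Bool) :=
  Measure.pi fun e => berBool (edgeProb α Δ N e)

/-- The (random) hyperedge set determined by the indicator `g`. -/
def edgesOf {N : ℕ} (Δ : ℕ) (g : Finset (Fin N) → Bool) : Finset (Finset (Fin N)) :=
  Finset.univ.filter fun e => g e = true ∧ 2 ≤ e.card ∧ e.card ≤ Δ

/-- `λ = Σ_p p(p-1) α_p`. -/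
def lamMix (α : ℕ → ℝ) (Δ : ℕ) : ℝ :=
  ∑ p ∈ Finset.Icc 2 Δ, (p : ℝ) * ((p : ℝ) - 1) * α p

/-- `λ' = Σ_p p(p-1)(p-2) α_p`. -/
def lamMix' (α : ℕ → ℝ) (Δ : ℕ) : ℝ :=
  ∑ p ∈ Finset.Icc 2 Δ, (p : ℝ) * ((p : ℝ) - 1) * ((p : ℝ) - 2) * α p

/-- The exploration (breadth-first search) process `(R_t, I_t, S_t, E_t)` of a hypergraph
started at the vertex `i`. -/
def explore {N : ℕ} (Edges : Finset (Finset (Fin N))) (i : Fin N) :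
    ℕ → Finset (Fin N) × Finset (Fin N) × Finset (Fin N) × Finset (Finset (Fin N))
  | 0 => (∅, {i}, Finset.univ.erase i, ∅)
  | t + 1 =>
      let P := explore Edges i t
      let Enew := Edges.filter fun e => (e ∩ P.2.1).Nonempty ∧ e ∩ P.1 = ∅
      (P.1 ∪ P.2.1, Enew.biUnion fun e => e ∩ P.2.2.1,
        P.2.2.1 \ Enew.biUnion fun e => e ∩ P.2.2.1, Enew)

/-- The set `I_t` of newly explored vertices at step `t`. -/
def Iset {N : ℕ} (Edges : Finset (Finset (Fin N))) (i : Fin N) (t : ℕ) : Finset (Fin N) :=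
  (explore Edges i t).2.1

/-- Disorder-and-graph-averaged two-replica observable under the continuous perturbation
in the diluted model. -/
def dilContExp (α : ℕ → ℝ) (Δ N : ℕ) (ρ : ℕ → ℝ → ℝ) (β t : ℝ)
    (f : (Fin N → Bool) → (Fin N → Bool) → ℝ) : ℝ :=
  ∫ ω : (Finset (Fin N) → Bool) × (Finset (Fin N) → ℝ) × (Finset (Fin N) → ℝ),
    gibbs2 β (ham (edgesOf Δ ω.1) ρ ω.2.1)
      (ham (edgesOf Δ ω.1) ρ (contPerturb t ω.2.1 ω.2.2)) f
    ∂((graphMeasure α Δ N).prod (pairGauss (Finset (Fin N))))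

/-- Disorder-and-graph-averaged two-replica observable under the discrete perturbation
in the diluted model. -/
def dilDiscExp (α : ℕ → ℝ) (Δ N : ℕ) (ρ : ℕ → ℝ → ℝ) (β t : ℝ)
    (f : (Fin N → Bool) → (Fin N → Bool) → ℝ) : ℝ :=
  ∫ ω : (Finset (Fin N) → Bool) ×
      (Finset (Fin N) → ℝ) × (Finset (Fin N) → ℝ) × (Finset (Fin N) → Bool),
    gibbs2 β (ham (edgesOf Δ ω.1) ρ ω.2.1)
      (ham (edgesOf Δ ω.1) ρ (discPerturb ω.2.1 ω.2.2.1 ω.2.2.2)) f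
    ∂((graphMeasure α Δ N).prod (tripleGaussBer (Finset (Fin N)) (Real.exp (-t))))

/-! ### The Lévy model -/

/-- Hamiltonian of the Lévy model: `H(σ) = a_N⁻¹ Σ_{i,j} ρ(J_{ij}) σ_i σ_j`. -/
def levyHam (N : ℕ) (aN : ℝ) (ρ : ℝ → ℝ) (J : Fin N × Fin N → ℝ) (σ : Fin N → Bool) : ℝ :=
  (∑ p : Fin N × Fin N, ρ (J p) * (spin (σ p.1) * spin (σ p.2))) / aN

/-- The normalization `a_N = inf{x > 0 : P(|ρ(J)| > x) ≤ 1/N}`. -/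
def levyAN (ρ : ℝ → ℝ) (N : ℕ) : ℝ :=
  sInf {x : ℝ | 0 < x ∧ ((gaussianReal 0 1) {j | x < |ρ j|}).toReal ≤ 1 / N}

/-- The coupled free energy `F_N(t,λ)` of the Lévy model, with the two systems
perturbed by the Ornstein–Uhlenbeck flow at time `t`. -/
def levyF (N : ℕ) (β aN lam : ℝ) (ρ : ℝ → ℝ) (t : ℝ) : ℝ :=
  (∫ ω : (Fin N × Fin N → ℝ) × (Fin N × Fin N → ℝ) × (Fin N × Fin N → ℝ),
      Real.log (∑ σ : Fin N → Bool, ∑ τ : Fin N → Bool,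
        Real.exp (β * levyHam N aN ρ (fun p => Real.exp (-t / 2) * ω.1 p +
              Real.sqrt (1 - Real.exp (-t)) * ω.2.1 p) σ +
          β * levyHam N aN ρ (fun p => Real.exp (-t / 2) * ω.1 p +
              Real.sqrt (1 - Real.exp (-t)) * ω.2.2 p) τ +
          lam * N * overlap σ τ ^ 2))
    ∂tripleGauss (Fin N × Fin N)) / N

/-- The coupled free energy `F_N(∞,λ)`: the two systems carry independent disorders. -/
def levyFinf (N : ℕ) (β aN lam : ℝ) (ρ : ℝ → ℝ) : ℝ :=
  (∫ ω : (Fin N × Fin N → ℝ) × (Fin N × Fin N → ℝ) × (Fin N × Fin N → ℝ),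
      Real.log (∑ σ : Fin N → Bool, ∑ τ : Fin N → Bool,
        Real.exp (β * levyHam N aN ρ ω.2.1 σ + β * levyHam N aN ρ ω.2.2 τ +
          lam * N * overlap σ τ ^ 2))
    ∂tripleGauss (Fin N × Fin N)) / N

/-- `φ(t) = Σ_r E[L_r(J¹(t)) L_r(J²(t))]` where `J^i(t) = e^{-t/2} J + √(1-e^{-t}) J^i`. -/
def phiFn (k m : ℕ) (L : Fin m → (Fin k → ℝ) → ℝ) (t : ℝ) : ℝ :=
  ∑ r : Fin m, ∫ ω : (Fin k → ℝ) × (Fin k → ℝ) × (Fin k → ℝ),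
    L r (fun l => Real.exp (-t / 2) * ω.1 l + Real.sqrt (1 - Real.exp (-t)) * ω.2.1 l) *
      L r (fun l => Real.exp (-t / 2) * ω.1 l + Real.sqrt (1 - Real.exp (-t)) * ω.2.2 l)
    ∂tripleGauss (Fin k)

namespace Polynomial

lemma hermite_comp_neg_X (n : ℕ) : (hermite n).comp (-X) = (-1) ^ n * hermite n := by
  induction n with
  | zero => simp
  | succ n ih =>
    have hder : (derivative (hermite n)).comp (-X) = -derivative ((-1) ^ n * hermite n) := by
      rw [← ih, derivative_comp]
      simp
    rw [hermite_succ, sub_comp, mul_comp, ih, hder]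
    simp only [X_comp, derivative_mul, derivative_pow, derivative_neg, derivative_one]
    ring

end Polynomial

lemma hermiteFn_mul_of_abs_eq_one {s : ℝ} (hs : |s| = 1) (m : ℕ) (x : ℝ) :
    hermiteFn m (s * x) = s ^ m * hermiteFn m x := by
  rcases (abs_eq zero_le_one).mp hs with rfl | rfl
  · simp
  · have h := congrArg (Polynomial.aeval x) (Polynomial.hermite_comp_neg_X m)
    simp only [Polynomial.aeval_comp, map_neg, Polynomial.aeval_X, map_mul, map_pow,
      map_one] at h
    simp only [hermiteFn, neg_one_mul, h, mul_div_assoc]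

lemma hermiteProd_mul_of_abs_eq_one {ι : Type*} [Fintype ι] {s : ι → ℝ}
    (hs : ∀ e, |s e| = 1) (n : ι → ℕ) (x : ι → ℝ) :
    hermiteProd n (fun e => s e * x e) = (∏ e, s e ^ n e) * hermiteProd n x := by
  simp only [hermiteProd, hermiteFn_mul_of_abs_eq_one (hs _), Finset.prod_mul_distrib]

lemma apply_mul_of_abs_eq_one {f : ℝ → ℝ} (hf : ∀ x, f (-x) = -f x) {s : ℝ} (hs : |s| = 1)
    (x : ℝ) : f (s * x) = s * f x := by
  rcases (abs_eq zero_le_one).mp hs with rfl | rfl <;> simp [hf]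

lemma measurePreserving_mul_gaussianReal {s : ℝ} (hs : |s| = 1) (v : NNReal) :
    MeasurePreserving (s * ·) (gaussianReal 0 v) (gaussianReal 0 v) := by
  refine ⟨measurable_const_mul s, ?_⟩
  rw [gaussianReal_map_const_mul, mul_zero]
  congr
  ext
  simp [← sq_abs, hs]

def signFlip {ι : Type*} {s : ι → ℝ} (hs : ∀ e, |s e| = 1) : (ι → ℝ) ≃ᵐ (ι → ℝ) :=
  MeasurableEquiv.piCongrRight fun e =>
    MeasurableEquiv.mulLeft₀ (s e) (by simp [← abs_ne_zero, hs e])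

lemma measurePreserving_signFlip {ι : Type*} [Fintype ι] {s : ι → ℝ} (hs : ∀ e, |s e| = 1) :
    MeasurePreserving (signFlip hs) (gaussianPi ι) (gaussianPi ι) :=
  measurePreserving_pi _ _ fun e => measurePreserving_mul_gaussianReal (hs e) 1

lemma abs_spin (b : Bool) : |spin b| = 1 := by
  cases b <;> simp [spin]

lemma spin_beq (b c : Bool) : spin (b == c) = spin b * spin c := by
  cases b <;> cases c <;> norm_num [spin]

lemma abs_sigEdge (a : Fin N → Bool) (e : Finset (Fin N)) : |sigEdge a e| = 1 := by
  simp [sigEdge, Finset.abs_prod, abs_spin]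

def spinGauge (a : Fin N → Bool) : Equiv.Perm (Fin N → Bool) :=
  Function.Involutive.toPerm (fun σ v => a v == σ v) fun σ =>
    funext fun v => show (a v == (a v == σ v)) = σ v by cases a v <;> cases σ v <;> rfl

lemma spin_spinGauge (a σ : Fin N → Bool) (v : Fin N) :
    spin (spinGauge a σ v) = spin (a v) * spin (σ v) :=
  spin_beq _ _

lemma sigEdge_spinGauge (a σ : Fin N → Bool) (e : Finset (Fin N)) :
    sigEdge (spinGauge a σ) e = sigEdge a e * sigEdge σ e := by
  simp only [sigEdge, spin_spinGauge, Finset.prod_mul_distrib]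

lemma spinGauge_symm (a : Fin N → Bool) : (spinGauge a).symm = spinGauge a :=
  Function.Involutive.toPerm_symm _

lemma ham_signFlip (Edges : Finset (Finset (Fin N))) {ρ : ℕ → ℝ → ℝ}
    (hρodd : ∀ p x, ρ p (-x) = -ρ p x) (a : Fin N → Bool) (J : Finset (Fin N) → ℝ) :
    ham Edges ρ (fun e => sigEdge a e * J e) = ham Edges ρ J ∘ spinGauge a := by
  ext σ
  refine Finset.sum_congr rfl fun e _ => ?_
  rw [apply_mul_of_abs_eq_one (hρodd _) (abs_sigEdge a e), sigEdge_spinGauge]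
  ring

lemma gibbs_comp_perm (β : ℝ) (H f : (Fin N → Bool) → ℝ) (g : Equiv.Perm (Fin N → Bool)) :
    gibbs β (H ∘ g) f = gibbs β H (f ∘ g.symm) := by
  simp only [gibbs, Function.comp_apply]
  rw [← Equiv.sum_comp g (fun σ => f (g.symm σ) * Real.exp (β * H σ)),
    ← Equiv.sum_comp g (fun σ => Real.exp (β * H σ))]
  simp

lemma gibbs_const_mul (β c : ℝ) (H f : (Fin N → Bool) → ℝ) :
    gibbs β H (fun σ => c * f σ) = c * gibbs β H f := by
  simp only [gibbs, mul_assoc, ← Finset.mul_sum, mul_div_assoc]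

lemma gibbs_twoPoint_signFlip (Edges : Finset (Finset (Fin N))) {ρ : ℕ → ℝ → ℝ}
    (hρodd : ∀ p x, ρ p (-x) = -ρ p x) (β : ℝ) (a : Fin N → Bool) (i j : Fin N)
    (J : Finset (Fin N) → ℝ) :
    gibbs β (ham Edges ρ fun e => sigEdge a e * J e) (fun σ => spin (σ i) * spin (σ j)) =
      spin (a i) * spin (a j) * gibbs β (ham Edges ρ J) (fun σ => spin (σ i) * spin (σ j)) := by
  rw [ham_signFlip Edges hρodd, gibbs_comp_perm, spinGauge_symm, ← gibbs_const_mul]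
  congr 1
  ext σ
  simp only [Function.comp_apply, spin_spinGauge]
  ring

lemma twoPointCoeff_eq_mul (Edges : Finset (Finset (Fin N))) {ρ : ℕ → ℝ → ℝ}
    (hρodd : ∀ p x, ρ p (-x) = -ρ p x) (β : ℝ) (a : Fin N → Bool) (i j : Fin N)
    (n : Finset (Fin N) → ℕ) :
    twoPointCoeff Edges ρ β i j n =
      (spin (a i) * spin (a j) * ∏ e ∈ Esupp n, sigEdge a e ^ n e) *
        twoPointCoeff Edges ρ β i j n := by
  have hs := abs_sigEdge a
  have hsupp : ∏ e ∈ Esupp n, sigEdge a e ^ n e = ∏ e, sigEdge a e ^ n e :=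
    Finset.prod_filter_of_ne fun e _ he hn => he (by rw [hn, pow_zero])
  have hflip : ∀ J, gibbs β (ham Edges ρ (signFlip hs J)) (fun σ => spin (σ i) * spin (σ j)) *
      hermiteProd n (signFlip hs J) =
        (spin (a i) * spin (a j) * ∏ e ∈ Esupp n, sigEdge a e ^ n e) *
          (gibbs β (ham Edges ρ J) (fun σ => spin (σ i) * spin (σ j)) * hermiteProd n J) := by
    intro J
    change gibbs β (ham Edges ρ fun e => sigEdge a e * J e) _ *
      hermiteProd n (fun e => sigEdge a e * J e) = _
    rw [gibbs_twoPoint_signFlip Edges hρodd, hermiteProd_mul_of_abs_eq_one hs, hsupp]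
    ring
  calc twoPointCoeff Edges ρ β i j n
      = ∫ J, gibbs β (ham Edges ρ (signFlip hs J)) (fun σ => spin (σ i) * spin (σ j)) *
          hermiteProd n (signFlip hs J) ∂gaussianPi (Finset (Fin N)) :=
        ((measurePreserving_signFlip hs).integral_comp' _).symm
    _ = _ := by simp_rw [hflip]; exact integral_const_mul _ _

theorem stmt0_general
    (N : ℕ)
    (Edges : Finset (Finset (Fin N)))
    (ρ : ℕ → ℝ → ℝ)
    (hρodd : ∀ p x, ρ p (-x) = - ρ p x)
    (β : ℝ)
    (a : Fin N → Bool) (i j : Fin N)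
    (n : Finset (Fin N) → ℕ) :
    twoPointCoeff Edges ρ β i j n
        = (spin (a i) * spin (a j) * ∏ e ∈ Esupp n, (∏ v ∈ e, spin (a v)) ^ n e) *
            twoPointCoeff Edges ρ β i j n ∧
      (spin (a i) * spin (a j) * ∏ e ∈ Esupp n, (∏ v ∈ e, spin (a v)) ^ n e = -1 →
        twoPointCoeff Edges ρ β i j n = 0) := by
  have key := twoPointCoeff_eq_mul Edges hρodd β a i j n
  unfold sigEdge at key
  refine ⟨key, fun hI => ?_⟩
  rw [hI, neg_one_mul] at key
  linarith

/-- (Lemma `coefficient zero`.)  In the generalized short-range model at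
inverse temperature `0 ≤ β < ∞`, for every sign pattern `a ∈ {±1}^N`, vertices `i, j`, and
frequency `n ∈ ℤ₊^E`, one has `E[h_n(J) ⟨σ_i σ_j⟩] = I_n(a) E[h_n(J) ⟨σ_i σ_j⟩]` where
`I_n(a) = a_i a_j ∏_{e ∈ E(n)} a_e^{n_e}`; in particular the coefficient vanishes if
`I_n(a) = -1`. -/
theorem stmt0
    (N Δ : ℕ) (hN : 1 ≤ N) (hΔ : 2 ≤ Δ)
    (Edges : Finset (Finset (Fin N)))
    (hcard : ∀ e ∈ Edges, 2 ≤ e.card ∧ e.card ≤ Δ)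
    (ρ : ℕ → ℝ → ℝ) (hρmeas : ∀ p, Measurable (ρ p))
    (hρodd : ∀ p x, ρ p (-x) = - ρ p x)
    (β : ℝ) (hβ : 0 ≤ β)
    (a : Fin N → Bool) (i j : Fin N)
    (n : Finset (Fin N) → ℕ) (hsupp : ∀ e, n e ≠ 0 → e ∈ Edges) :
    twoPointCoeff Edges ρ β i j n
        = (spin (a i) * spin (a j) * ∏ e ∈ Esupp n, (∏ v ∈ e, spin (a v)) ^ n e) *
            twoPointCoeff Edges ρ β i j n ∧
      (spin (a i) * spin (a j) * ∏ e ∈ Esupp n, (∏ v ∈ e, spin (a v)) ^ n e = -1 →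
        twoPointCoeff Edges ρ β i j n = 0) :=
  stmt0_general N Edges ρ hρodd β a i j n
end
end

section
/- Consider the generalized short-range model on G = ([N], E) (hyperedges of arbitrary, possibly odd, cardinalities). Let i ≠ j be vertices in [N], n ∈ ℤ_+^E, and r ≥ 1, and assume that the ball B_r(i) of radius r around i, with the hyperedges of G contained in it, is a hypertree. If the Fourier–Hermite coefficient φ̂_{ij}(n) = E[⟨σ_i σ_j⟩ h_n(J)] is nonzero, then i, j ∈ V(n) and |E(n)| ≥ min(r, d(i,j)). -/
open MeasureTheory ProbabilityTheory Real Finset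

noncomputable section

/-! ### Spin models on hypergraphs -/

variable {N : ℕ}

/-!
Flipping the spin at a vertex `v` together with the sign of the coupling of every hyperedge
through `v` preserves the Gaussian law of `J` and the Gibbs measure, since the `ρ_p` are odd.
It multiplies `φ̂_{ij}(n)` by `(-1)^(deg_n v + [v = i] + [v = j])` with
`deg_n v = Σ_{e ∋ v} n_e`, so a nonzero coefficient forces `deg_n v` to be odd exactly at
`v ∈ {i, j}`; in particular `i, j ∈ V(n)`.

For `ℓ < min(r, d(i,j))` some hyperedge of `E(n)` meets both `B_ℓ(i)` and its complement:
otherwise the hyperedges of odd multiplicity inside `B_ℓ(i)` form a nonempty Berge-acyclic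
hypergraph (part of the hypertree `B_r(i)`), whose vertices of odd degree are those of odd
`deg_n` in `B_ℓ(i)`, i.e. only `i`; but such a hypergraph has two leaves. A hyperedge meets
consecutive spheres only, so it crosses at most one level `ℓ`, and `|E(n)| ≥ min(r, d(i,j))`.
-/

section BergePath

variable {Edges : Finset (Finset (Fin N))}

lemma HasBergeCycle.mono {Edges' : Finset (Finset (Fin N))} (h : HasBergeCycle Edges)
    (hsub : Edges ⊆ Edges') : HasBergeCycle Edges' := by
  obtain ⟨ℓ, vs, es, hℓ, hvs, hes, hmem, hstep⟩ := h
  exact ⟨ℓ, vs, es, hℓ, hvs, hes, fun k => hsub (hmem k), hstep⟩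

namespace IsBergePath

variable {ℓ : ℕ} {vs : Fin (ℓ + 1) → Fin N} {es : Fin ℓ → Finset (Fin N)} {v w : Fin N}

lemma nil (Edges : Finset (Finset (Fin N))) (v : Fin N) :
    IsBergePath Edges 0 (fun _ => v) Fin.elim0 v v :=
  ⟨fun a b _ => Fin.ext (by omega), fun a => a.elim0, fun k => k.elim0, rfl, rfl,
    fun k => k.elim0⟩

lemma single {e : Finset (Fin N)} (he : e ∈ Edges) (hv : v ∈ e) (hw : w ∈ e) (hvw : v ≠ w) :
    IsBergePath Edges 1 ![v, w] ![e] v w := by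
  refine ⟨?_, fun a b _ => Subsingleton.elim a b, fun _ => by simpa using he, rfl, rfl,
    fun k => by fin_cases k; exact ⟨hv, hw⟩⟩
  intro a b
  fin_cases a <;> fin_cases b <;> simp [hvw, hvw.symm]

lemma hdist_le (h : IsBergePath Edges ℓ vs es v w) : hdist Edges v w ≤ ℓ :=
  sInf_le ⟨ℓ, vs, es, h, rfl⟩

lemma take (h : IsBergePath Edges ℓ vs es v w) (k : Fin (ℓ + 1)) :
    IsBergePath Edges k (fun m => vs (Fin.castLE (by omega) m))
      (fun m => es (Fin.castLE (by omega) m)) v (vs k) := by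
  obtain ⟨hvs, hes, hmem, h0, -, hstep⟩ := h
  refine ⟨hvs.comp (Fin.castLE_injective _), hes.comp (Fin.castLE_injective _),
    fun m => hmem _, ?_, rfl, fun m => hstep (Fin.castLE _ m)⟩
  rw [← h0]
  rfl

lemma snoc (h : IsBergePath Edges ℓ vs es v w) {e : Finset (Fin N)} {x : Fin N}
    (he : e ∈ Edges) (hwe : w ∈ e) (hxe : x ∈ e) (hx : x ∉ Set.range vs)
    (hes : e ∉ Set.range es) :
    IsBergePath Edges (ℓ + 1) (Fin.snoc vs x) (Fin.snoc es e) v x := by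
  obtain ⟨hvs, hes', hmem, h0, hlast, hstep⟩ := h
  refine ⟨Fin.snoc_injective_of_injective hvs hx, Fin.snoc_injective_of_injective hes' hes,
    fun k => ?_, by rw [← Fin.castSucc_zero, Fin.snoc_castSucc, h0], Fin.snoc_last _ _, fun k => ?_⟩
  · induction k using Fin.lastCases with
    | last => simpa using he
    | cast k => simpa using hmem k
  · induction k using Fin.lastCases with
    | last => simpa [Fin.succ_last, hlast] using ⟨hwe, hxe⟩
    | cast k =>
      rw [Fin.succ_castSucc, Fin.snoc_castSucc, Fin.snoc_castSucc, Fin.snoc_castSucc]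
      exact hstep k

lemma reverse (h : IsBergePath Edges ℓ vs es v w) :
    IsBergePath Edges ℓ (fun m => vs m.rev) (fun a => es a.rev) w v := by
  obtain ⟨hvs, hes, hmem, h0, hlast, hstep⟩ := h
  refine ⟨hvs.comp Fin.rev_injective, hes.comp Fin.rev_injective, fun a => hmem _,
    by simpa using hlast, by simpa using h0, fun a => ?_⟩
  simpa [Fin.rev_castSucc, Fin.rev_succ] using (hstep a.rev).symm

lemma hasBergeCycle (h : IsBergePath Edges ℓ vs es v w) (hℓ : 1 ≤ ℓ) {f : Finset (Fin N)}
    (hf : f ∈ Edges) (hvf : v ∈ f) (hwf : w ∈ f) (hfes : f ∉ Set.range es) :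
    HasBergeCycle Edges := by
  obtain ⟨hvs, hes, hmem, h0, hlast, hstep⟩ := h
  refine ⟨ℓ + 1, vs, Fin.snoc es f, by omega, hvs, Fin.snoc_injective_of_injective hes hfes,
    fun k => ?_, fun k => ?_⟩
  · induction k using Fin.lastCases with
    | last => simpa using hf
    | cast k => simpa using hmem k
  · induction k using Fin.lastCases with
    | last => simpa [finRotate_last, hlast, h0] using ⟨hwf, hvf⟩
    | cast k => simpa [finRotate_apply, Fin.coeSucc_eq_succ] using hstep k

/-- A second hyperedge through the first vertex of a longest path would either close a Berge
cycle with the path or extend it. -/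
lemma eq_first_of_mem (hacyc : ¬ HasBergeCycle Edges) (hcard : ∀ e ∈ Edges, 2 ≤ e.card)
    {vs : Fin (ℓ + 2) → Fin N} {es : Fin (ℓ + 1) → Finset (Fin N)}
    (h : IsBergePath Edges (ℓ + 1) vs es v w)
    (hmax : ∀ k vs' es' (v' w' : Fin N), IsBergePath Edges k vs' es' v' w' → k ≤ ℓ + 1)
    {f : Finset (Fin N)} (hf : f ∈ Edges) (hvf : v ∈ f) : f = es 0 := by
  have ⟨_, hes, _, h0, _, hstep⟩ := h
  by_contra hne
  by_cases hfes : f ∈ Set.range es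
  · obtain ⟨t, rfl⟩ := hfes
    have ht : t ≠ 0 := fun ht => hne (ht ▸ rfl)
    refine hacyc ((h.take t.castSucc).hasBergeCycle (Nat.one_le_iff_ne_zero.mpr
      (Fin.val_ne_iff.mpr ht)) hf hvf (hstep t).1 ?_)
    rintro ⟨m, hm⟩
    have hmt := Fin.val_eq_of_eq (hes hm)
    have hm' := m.isLt
    simp only [Fin.val_castLE, Fin.val_castSucc] at hmt hm'
    omega
  by_cases hnew : ∃ x ∈ f, x ∉ Set.range vs
  · obtain ⟨x, hxf, hx⟩ := hnew
    have := hmax _ _ _ _ _ (h.reverse.snoc hf hvf hxf (fun ⟨m, hm⟩ => hx ⟨_, hm⟩)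
      fun ⟨m, hm⟩ => hfes ⟨_, hm⟩)
    omega
  push Not at hnew
  obtain ⟨x, hxf, hxv⟩ := Finset.exists_mem_ne (hcard f hf) v
  obtain ⟨m, rfl⟩ := hnew x hxf
  have hm : m ≠ 0 := fun hm => hxv (hm ▸ h0)
  exact hacyc ((h.take m).hasBergeCycle (Nat.one_le_iff_ne_zero.mpr (Fin.val_ne_iff.mpr hm))
    hf hvf hxf fun hmem => hfes (Set.range_comp_subset_range _ es hmem))

lemma card_filter_mem_first_eq_one (hacyc : ¬ HasBergeCycle Edges)
    (hcard : ∀ e ∈ Edges, 2 ≤ e.card)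
    {vs : Fin (ℓ + 2) → Fin N} {es : Fin (ℓ + 1) → Finset (Fin N)}
    (h : IsBergePath Edges (ℓ + 1) vs es v w)
    (hmax : ∀ k vs' es' (v' w' : Fin N), IsBergePath Edges k vs' es' v' w' → k ≤ ℓ + 1) :
    (Edges.filter (v ∈ ·)).card = 1 := by
  have ⟨_, _, hmem, h0, _, hstep⟩ := h
  refine Finset.card_eq_one.mpr ⟨es 0, Finset.eq_singleton_iff_unique_mem.mpr ⟨?_, ?_⟩⟩
  · exact Finset.mem_filter.mpr ⟨hmem 0, h0 ▸ (hstep 0).1⟩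
  · intro f hf
    obtain ⟨hfE, hvf⟩ := Finset.mem_filter.mp hf
    exact h.eq_first_of_mem hacyc hcard hmax hfE hvf

end IsBergePath

/-- The two leaves are the ends of a longest Berge path. -/
lemma exists_ne_card_filter_mem_eq_one (hne : Edges.Nonempty)
    (hcard : ∀ e ∈ Edges, 2 ≤ e.card) (hacyc : ¬ HasBergeCycle Edges) :
    ∃ v w : Fin N, v ≠ w ∧ (Edges.filter (v ∈ ·)).card = 1 ∧
      (Edges.filter (w ∈ ·)).card = 1 := by
  set L : Set ℕ := {k | ∃ (vs : Fin (k + 1) → Fin N) (es : Fin k → Finset (Fin N)) (v w : Fin N),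
    IsBergePath Edges k vs es v w}
  have hL1 : 1 ∈ L := by
    obtain ⟨e, he⟩ := hne
    obtain ⟨v, hv, w, hw, hvw⟩ := Finset.one_lt_card.mp (hcard e he)
    exact ⟨_, _, v, w, IsBergePath.single he hv hw hvw⟩
  have hLbdd : BddAbove L := by
    refine ⟨N, fun k ⟨vs, es, v, w, hp⟩ => ?_⟩
    have := Fintype.card_le_of_injective vs hp.1
    simp only [Fintype.card_fin] at this
    omega
  obtain ⟨ℓ, hℓ⟩ : ∃ ℓ, sSup L = ℓ + 1 :=
    Nat.exists_eq_add_of_le' (le_csSup hLbdd hL1)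
  obtain ⟨vs, es, v, w, hp⟩ := hℓ ▸ Nat.sSup_mem ⟨1, hL1⟩ hLbdd
  have hmax : ∀ k vs' es' (v' w' : Fin N), IsBergePath Edges k vs' es' v' w' → k ≤ ℓ + 1 :=
    fun k vs' es' v' w' hp' => hℓ ▸ le_csSup hLbdd ⟨vs', es', v', w', hp'⟩
  refine ⟨v, w, ?_, hp.card_filter_mem_first_eq_one hacyc hcard hmax,
    hp.reverse.card_filter_mem_first_eq_one hacyc hcard hmax⟩
  obtain ⟨hvs, -, -, rfl, rfl, -⟩ := hp
  exact hvs.ne Fin.last_pos.ne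

lemma hdist_self (Edges : Finset (Finset (Fin N))) (v : Fin N) : hdist Edges v v = 0 :=
  nonpos_iff_eq_zero.mp (by simpa using (IsBergePath.nil Edges v).hdist_le)

lemma exists_isBergePath_of_hdist_le {v w : Fin N} {m : ℕ} (h : hdist Edges v w ≤ m) :
    ∃ ℓ ≤ m, ∃ vs es, IsBergePath Edges ℓ vs es v w := by
  have hne : {d : ℕ∞ | ∃ (ℓ : ℕ) (vs : Fin (ℓ + 1) → Fin N) (es : Fin ℓ → Finset (Fin N)),
      IsBergePath Edges ℓ vs es v w ∧ d = ℓ}.Nonempty := by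
    refine Set.nonempty_iff_ne_empty.mpr fun hempty => ?_
    rw [hdist, hempty] at h
    simp at h
  obtain ⟨ℓ, vs, es, hp, hℓ⟩ := csInf_mem hne
  exact ⟨ℓ, by exact_mod_cast (show hdist Edges v w = ℓ from hℓ) ▸ h, vs, es, hp⟩

lemma hdist_le_add_one_of_mem {i v w : Fin N} {e : Finset (Fin N)} (he : e ∈ Edges)
    (hv : v ∈ e) (hw : w ∈ e) {m : ℕ} (h : hdist Edges i v ≤ m) :
    hdist Edges i w ≤ (m + 1 : ℕ) := by
  obtain ⟨ℓ, hℓm, vs, es, hp⟩ := exists_isBergePath_of_hdist_le h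
  have ⟨_, hes, _, _, hlast, hstep⟩ := hp
  by_cases hwr : w ∈ Set.range vs
  · obtain ⟨k, rfl⟩ := hwr
    exact (hp.take k).hdist_le.trans (by exact_mod_cast (by omega : (k : ℕ) ≤ m + 1))
  by_cases her : e ∈ Set.range es
  · obtain ⟨k, rfl⟩ := her
    refine ((hp.take k.castSucc).snoc he (hstep k).1 hw
      (fun ⟨a, ha⟩ => hwr ⟨_, ha⟩) ?_).hdist_le.trans ?_
    · rintro ⟨a, ha⟩
      have hak := Fin.val_eq_of_eq (hes ha)
      have ha' := a.isLt
      simp only [Fin.val_castLE, Fin.val_castSucc] at hak ha'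
      omega
    · exact_mod_cast (by simp only [Fin.val_castSucc]; omega)
  · exact (hp.snoc he (hlast ▸ hv) hw hwr her).hdist_le.trans
      (by exact_mod_cast (by omega : ℓ + 1 ≤ m + 1))

end BergePath

section Gauge

def vertexDegree (n : Finset (Fin N) → ℕ) (v : Fin N) : ℕ :=
  ∑ e ∈ Finset.univ.filter (v ∈ ·), n e

lemma exists_odd_of_odd_vertexDegree {n : Finset (Fin N) → ℕ} {v : Fin N}
    (h : Odd (vertexDegree n v)) : ∃ e, v ∈ e ∧ Odd (n e) := by
  rw [vertexDegree, Finset.odd_sum_iff_odd_card_odd] at h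
  obtain ⟨e, he⟩ := Finset.card_pos.mp h.pos
  simp only [Finset.mem_filter, Finset.mem_univ, true_and] at he
  exact ⟨e, he⟩

lemma mem_Vsupp_of_odd_vertexDegree {n : Finset (Fin N) → ℕ} {v : Fin N}
    (h : Odd (vertexDegree n v)) : v ∈ Vsupp n := by
  obtain ⟨e, hve, hne⟩ := exists_odd_of_odd_vertexDegree h
  exact Finset.mem_biUnion.mpr ⟨e, Finset.mem_filter.mpr ⟨Finset.mem_univ _, hne.pos.ne'⟩, hve⟩

def flipSpin (v : Fin N) (σ : Fin N → Bool) : Fin N → Bool := Function.update σ v (!σ v)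

def flipCoupling (v : Fin N) (J : Finset (Fin N) → ℝ) : Finset (Fin N) → ℝ :=
  fun e => if v ∈ e then -J e else J e

lemma flipSpin_involutive (v : Fin N) : Function.Involutive (flipSpin v) := by
  intro σ
  simp [flipSpin]

lemma flipCoupling_involutive (v : Fin N) : Function.Involutive (flipCoupling v) := by
  intro J
  funext e
  by_cases hv : v ∈ e <;> simp [flipCoupling, hv]

lemma spin_flipSpin (v w : Fin N) (σ : Fin N → Bool) :
    spin (flipSpin v σ w) = (-1) ^ (if w = v then 1 else 0) * spin (σ w) := by
  by_cases hw : w = v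
  · subst hw
    cases h : σ w <;> simp [flipSpin, spin, h]
  · simp [flipSpin, hw]

lemma sigEdge_flipSpin (v : Fin N) (σ : Fin N → Bool) (e : Finset (Fin N)) :
    sigEdge (flipSpin v σ) e = (-1) ^ (if v ∈ e then 1 else 0) * sigEdge σ e := by
  simp only [sigEdge, spin_flipSpin, Finset.prod_mul_distrib, Finset.prod_pow_eq_pow_sum,
    Finset.sum_ite_eq']

lemma ham_flipCoupling (Edges : Finset (Finset (Fin N))) {ρ : ℕ → ℝ → ℝ}
    (hρodd : ∀ p x, ρ p (-x) = -ρ p x) (v : Fin N) (J : Finset (Fin N) → ℝ)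
    (σ : Fin N → Bool) : ham Edges ρ (flipCoupling v J) σ = ham Edges ρ J (flipSpin v σ) := by
  refine Finset.sum_congr rfl fun e _ => ?_
  by_cases hv : v ∈ e <;> simp [flipCoupling, sigEdge_flipSpin, hv, hρodd]

lemma gibbs_comp_involutive (β : ℝ) {g : (Fin N → Bool) → Fin N → Bool}
    (hg : Function.Involutive g) (H f : (Fin N → Bool) → ℝ) :
    gibbs β (fun σ => H (g σ)) f = gibbs β H (fun σ => f (g σ)) := by
  unfold gibbs
  rw [← hg.bijective.sum_comp (fun σ => f (g σ) * Real.exp (β * H σ)),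
    ← hg.bijective.sum_comp (fun σ => Real.exp (β * H σ))]
  simp only [hg _]

lemma hermiteFn_neg (m : ℕ) (x : ℝ) : hermiteFn m (-x) = (-1) ^ m * hermiteFn m x := by
  rw [hermiteFn, hermiteFn, ← mul_div_assoc, Polynomial.aeval_eq_sum_range (R := ℤ),
    Polynomial.aeval_eq_sum_range (R := ℤ), Finset.mul_sum]
  congr 1
  refine Finset.sum_congr rfl fun k _ => ?_
  by_cases hc : (Polynomial.hermite m).coeff k = 0
  · simp [hc]
  have heven : Even (m + k) :=
    Nat.not_odd_iff_even.mp fun h => hc (Polynomial.coeff_hermite_of_odd_add h)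
  rw [neg_pow, mul_smul_comm, neg_one_pow_congr (Nat.even_add.mp heven).symm]

lemma hermiteProd_flipCoupling (v : Fin N) (n : Finset (Fin N) → ℕ) (J : Finset (Fin N) → ℝ) :
    hermiteProd n (flipCoupling v J) = (-1) ^ vertexDegree n v * hermiteProd n J := by
  have hfactor : ∀ e, hermiteFn (n e) (flipCoupling v J e) =
      (-1) ^ (if v ∈ e then n e else 0) * hermiteFn (n e) (J e) := by
    intro e
    by_cases hv : v ∈ e <;> simp [flipCoupling, hv, hermiteFn_neg]
  simp only [hermiteProd, hfactor, Finset.prod_mul_distrib, Finset.prod_pow_eq_pow_sum,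
    vertexDegree, Finset.sum_filter]

lemma measurePreserving_flipCoupling (v : Fin N) :
    MeasurePreserving (flipCoupling v) (gaussianPi (Finset (Fin N)))
      (gaussianPi (Finset (Fin N))) := by
  refine measurePreserving_pi (fun _ => gaussianReal 0 1) (fun _ => gaussianReal 0 1)
    (f := fun e x => if v ∈ e then -x else x) fun e => ?_
  by_cases hv : v ∈ e
  · simp only [hv, if_true]
    exact ⟨measurable_neg, by simpa using gaussianReal_map_neg (μ := 0) (v := 1)⟩
  · simp only [hv, if_false]
    exact MeasurePreserving.id _

lemma integral_comp_flipCoupling (v : Fin N) (F : (Finset (Fin N) → ℝ) → ℝ) :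
    ∫ J, F (flipCoupling v J) ∂gaussianPi (Finset (Fin N)) =
      ∫ J, F J ∂gaussianPi (Finset (Fin N)) :=
  (measurePreserving_flipCoupling v).integral_comp'
    (f := MeasurableEquiv.ofInvolutive _ (flipCoupling_involutive v)
      (measurePreserving_flipCoupling v).measurable) F

/-- Gauge symmetry: flipping `σ_v` together with the couplings of the hyperedges through `v`. -/
lemma twoPointCoeff_eq_neg_one_pow_mul (Edges : Finset (Finset (Fin N))) {ρ : ℕ → ℝ → ℝ}
    (hρodd : ∀ p x, ρ p (-x) = -ρ p x) (β : ℝ) (i j v : Fin N) (n : Finset (Fin N) → ℕ) :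
    twoPointCoeff Edges ρ β i j n =
      (-1) ^ (vertexDegree n v + (if i = v then 1 else 0) + (if j = v then 1 else 0)) *
        twoPointCoeff Edges ρ β i j n := by
  have hobs : ∀ σ, spin (flipSpin v σ i) * spin (flipSpin v σ j) =
      (-1) ^ ((if i = v then 1 else 0) + (if j = v then 1 else 0)) * (spin (σ i) * spin (σ j)) := by
    intro σ
    rw [spin_flipSpin, spin_flipSpin, pow_add]
    ring
  have hgibbs : ∀ J, gibbs β (ham Edges ρ (flipCoupling v J)) (fun σ => spin (σ i) * spin (σ j)) =
      (-1) ^ ((if i = v then 1 else 0) + (if j = v then 1 else 0)) *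
        gibbs β (ham Edges ρ J) (fun σ => spin (σ i) * spin (σ j)) := by
    intro J
    simp only [funext (ham_flipCoupling Edges hρodd v J), gibbs_comp_involutive β
      (flipSpin_involutive v), hobs, gibbs_const_mul]
  conv_lhs => rw [twoPointCoeff, ← integral_comp_flipCoupling v]
  rw [twoPointCoeff, ← integral_const_mul]
  congr 1
  funext J
  rw [hgibbs, hermiteProd_flipCoupling, add_assoc, pow_add]
  ring

lemma odd_vertexDegree_iff {Edges : Finset (Finset (Fin N))} {ρ : ℕ → ℝ → ℝ}
    (hρodd : ∀ p x, ρ p (-x) = -ρ p x) {β : ℝ} {i j : Fin N} (hij : i ≠ j)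
    {n : Finset (Fin N) → ℕ} (hne : twoPointCoeff Edges ρ β i j n ≠ 0) (v : Fin N) :
    Odd (vertexDegree n v) ↔ v = i ∨ v = j := by
  have heven := (neg_one_pow_eq_one_iff_even (R := ℝ) (by norm_num)).mp
    (mul_left_eq_self₀.mp (twoPointCoeff_eq_neg_one_pow_mul Edges hρodd β i j v n).symm
      |>.resolve_right hne)
  by_cases hi : i = v <;> by_cases hj : j = v
  · exact absurd (hi.trans hj.symm) hij
  all_goals simp_all [Nat.even_add_one, eq_comm]

end Gauge

section Spheres

variable {Edges : Finset (Finset (Fin N))}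

def Crosses (Edges : Finset (Finset (Fin N))) (i : Fin N) (ℓ : ℕ) (e : Finset (Fin N)) : Prop :=
  (∃ v ∈ e, hdist Edges i v ≤ ℓ) ∧ ∃ w ∈ e, ¬ hdist Edges i w ≤ ℓ

lemma Crosses.eq {i : Fin N} {e : Finset (Fin N)} (he : e ∈ Edges) {ℓ ℓ' : ℕ}
    (h : Crosses Edges i ℓ e) (h' : Crosses Edges i ℓ' e) : ℓ = ℓ' := by
  have hlt : ∀ {a b : ℕ}, Crosses Edges i a e → Crosses Edges i b e → ¬ a < b := by
    rintro a b ⟨⟨v, hv, hva⟩, -⟩ ⟨-, w, hw, hwb⟩ hab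
    exact hwb ((hdist_le_add_one_of_mem he hv hw hva).trans (by exact_mod_cast hab))
  exact le_antisymm (not_lt.mp (hlt h' h)) (not_lt.mp (hlt h h'))

lemma le_card_of_forall_exists_crosses {S : Finset (Finset (Fin N))} (hS : S ⊆ Edges)
    {i : Fin N} {T : ℕ} (h : ∀ ℓ < T, ∃ e ∈ S, Crosses Edges i ℓ e) : T ≤ S.card := by
  choose! f hfS hf using h
  simpa using Finset.card_le_card_of_injOn f (s := Finset.range T)
    (fun ℓ hℓ => hfS ℓ (Finset.mem_range.mp hℓ)) fun a ha b hb hab =>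
      (hf a (Finset.mem_range.mp ha)).eq (hS (hfS a (Finset.mem_range.mp ha)))
        (hab ▸ hf b (Finset.mem_range.mp hb))

lemma exists_crosses_of_odd_vertexDegree_iff {i j : Fin N} {r ℓ : ℕ}
    (hcard : ∀ e ∈ Edges, 2 ≤ e.card)
    (hacyc : ¬ HasBergeCycle (Edges.filter fun e => e ⊆ hball Edges i r))
    {n : Finset (Fin N) → ℕ} (hsupp : ∀ e, n e ≠ 0 → e ∈ Edges)
    (hodd : ∀ v, Odd (vertexDegree n v) ↔ v = i ∨ v = j)
    (hℓr : ℓ < r) (hjℓ : ¬ hdist Edges i j ≤ ℓ) : ∃ e, n e ≠ 0 ∧ Crosses Edges i ℓ e := by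
  by_contra! hclosed
  have hinside : ∀ e, Odd (n e) → ∀ v ∈ e, hdist Edges i v ≤ ℓ → ∀ w ∈ e, hdist Edges i w ≤ ℓ :=
    fun e he v hv hvℓ w hw => by_contra fun hwℓ => hclosed e he.pos.ne' ⟨⟨v, hv, hvℓ⟩, w, hw, hwℓ⟩
  set F := Finset.univ.filter fun e => Odd (n e) ∧ ∀ w ∈ e, hdist Edges i w ≤ ℓ
  have hFE : F ⊆ Edges.filter fun e => e ⊆ hball Edges i r := by
    intro e he
    obtain ⟨hodde, heℓ⟩ := (Finset.mem_filter.mp he).2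
    refine Finset.mem_filter.mpr ⟨hsupp e hodde.pos.ne', fun w hw => ?_⟩
    simpa [hball] using (heℓ w hw).trans (by exact_mod_cast hℓr.le : (ℓ : ℕ∞) ≤ r)
  have hdeg : ∀ x, hdist Edges i x ≤ ℓ →
      (Odd (F.filter (x ∈ ·)).card ↔ Odd (vertexDegree n x)) := by
    intro x hx
    have hfilter : F.filter (x ∈ ·) = (Finset.univ.filter (x ∈ ·)).filter (Odd ∘ n) := by
      ext e
      simp only [F, Finset.mem_filter, Finset.mem_univ, true_and, Function.comp_apply]
      exact ⟨fun h => ⟨h.2, h.1.1⟩, fun h => ⟨⟨h.2, hinside e h.2 x h.1 hx⟩, h.1⟩⟩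
    rw [hfilter, vertexDegree, Finset.odd_sum_iff_odd_card_odd]
    rfl
  have hFne : F.Nonempty := by
    have := (hdeg i (by rw [hdist_self]; exact zero_le)).mpr ((hodd i).mpr (.inl rfl))
    exact (Finset.card_pos.mp this.pos).mono (Finset.filter_subset _ _)
  have hleaf : ∀ x, (F.filter (x ∈ ·)).card = 1 → x = i := by
    intro x hx
    obtain ⟨e, he⟩ := Finset.card_pos.mp (hx ▸ Nat.one_pos)
    obtain ⟨heF, hxe⟩ := Finset.mem_filter.mp he
    have hxℓ := (Finset.mem_filter.mp heF).2.2 x hxe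
    refine ((hodd x).mp ((hdeg x hxℓ).mp (hx ▸ odd_one))).resolve_right ?_
    rintro rfl
    exact hjℓ hxℓ
  obtain ⟨v, w, hvw, hv, hw⟩ := exists_ne_card_filter_mem_eq_one hFne
    (fun e he => hcard e (Finset.mem_filter.mp (hFE he)).1) fun h => hacyc (h.mono hFE)
  exact hvw ((hleaf v hv).trans (hleaf w hw).symm)

end Spheres

theorem stmt2_general
    (N Δ : ℕ)
    (Edges : Finset (Finset (Fin N)))
    (hcard : ∀ e ∈ Edges, 2 ≤ e.card ∧ e.card ≤ Δ)
    (ρ : ℕ → ℝ → ℝ)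
    (hρodd : ∀ p x, ρ p (-x) = - ρ p x)
    (β : ℝ)
    (i j : Fin N) (hij : i ≠ j) (r : ℕ)
    (hacyclic : ¬ HasBergeCycle (Edges.filter fun e => e ⊆ hball Edges i r))
    (n : Finset (Fin N) → ℕ) (hsupp : ∀ e, n e ≠ 0 → e ∈ Edges)
    (hne : twoPointCoeff Edges ρ β i j n ≠ 0) :
    i ∈ Vsupp n ∧ j ∈ Vsupp n ∧
      min (r : ℕ∞) (hdist Edges i j) ≤ ((Esupp n).card : ℕ∞) := by
  have hodd := odd_vertexDegree_iff hρodd hij hne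
  refine ⟨mem_Vsupp_of_odd_vertexDegree ((hodd i).mpr (.inl rfl)),
    mem_Vsupp_of_odd_vertexDegree ((hodd j).mpr (.inr rfl)), ?_⟩
  obtain ⟨T, hT⟩ := ENat.ne_top_iff_exists.mp
    (ne_top_of_le_ne_top (ENat.natCast_ne_top r) (min_le_left (r : ℕ∞) (hdist Edges i j)))
  rw [← hT, Nat.cast_le]
  refine le_card_of_forall_exists_crosses (S := Esupp n) (i := i)
    (fun e he => hsupp e (Finset.mem_filter.mp he).2) fun ℓ hℓ => ?_
  obtain ⟨hℓr, hℓj⟩ := lt_min_iff.mp (hT ▸ Nat.cast_lt.mpr hℓ : (ℓ : ℕ∞) < _)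
  obtain ⟨e, hne, hcross⟩ := exists_crosses_of_odd_vertexDegree_iff (fun e he => (hcard e he).1)
    hacyclic hsupp hodd (by exact_mod_cast hℓr) (not_le.mpr hℓj)
  exact ⟨e, Finset.mem_filter.mpr ⟨Finset.mem_univ _, hne⟩, hcross⟩

/-- In the generalized short-range model, if the ball of radius `r ≥ 1`
around `i` (with the hyperedges of `G` contained in it) is a hypertree, then a nonvanishing
Fourier–Hermite coefficient `φ̂_{ij}(n) ≠ 0` forces `i, j ∈ V(n)` and
`|E(n)| ≥ min(r, d(i,j))`. -/
theorem stmt2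
    (N Δ : ℕ) (hN : 1 ≤ N) (hΔ : 2 ≤ Δ)
    (Edges : Finset (Finset (Fin N)))
    (hcard : ∀ e ∈ Edges, 2 ≤ e.card ∧ e.card ≤ Δ)
    (ρ : ℕ → ℝ → ℝ) (hρmeas : ∀ p, Measurable (ρ p))
    (hρodd : ∀ p x, ρ p (-x) = - ρ p x)
    (β : ℝ) (hβ : 0 ≤ β)
    (i j : Fin N) (hij : i ≠ j) (r : ℕ) (hr : 1 ≤ r)
    (hconn : ∀ v ∈ hball Edges i r, ∀ w ∈ hball Edges i r,
      ∃ (ℓ : ℕ) (vs : Fin (ℓ + 1) → Fin N) (es : Fin ℓ → Finset (Fin N)),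
        IsBergePath (Edges.filter fun e => e ⊆ hball Edges i r) ℓ vs es v w)
    (hacyclic : ¬ HasBergeCycle (Edges.filter fun e => e ⊆ hball Edges i r))
    (n : Finset (Fin N) → ℕ) (hsupp : ∀ e, n e ≠ 0 → e ∈ Edges)
    (hne : twoPointCoeff Edges ρ β i j n ≠ 0) :
    i ∈ Vsupp n ∧ j ∈ Vsupp n ∧
      min (r : ℕ∞) (hdist Edges i j) ≤ ((Esupp n).card : ℕ∞) :=
  stmt2_general N Δ Edges hcard ρ hρodd β i j hij r hacyclic n hsupp hne
end
end

section
/- For the exploration process of the diluted mixed p-spin random hypergraph started at a fixed vertex i, for every t ∈ ℤ_+: E|I_t| ≤ λ^t and E|I_t|² ≤ Σ_{k=t}^{2t} λ^k + λ′ · Σ_{k=t−1}^{2(t−1)} λ^k, where λ = Σ_{2≤p≤Δ} p(p−1)α_p, λ′ = Σ_{2≤p≤Δ} p(p−1)(p−2)α_p, and empty sums are interpreted as 0. -/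
open MeasureTheory ProbabilityTheory Real Finset

noncomputable section

/-! ### Spin models on hypergraphs -/

variable {N : ℕ}

/-! The exploration up to time `t` never looks at a hyperedge disjoint from `R_t`, so resampling
such an edge does not change the history; this replaces conditioning on the past. Every vertex of
`I_{t+1}` lies in `e ∩ S_t` for a present edge `e` meeting `I_t` and avoiding `R_t`, and
`|e ∩ S_t| ≤ |e| - 1`. A vertex lies on at most `C(N-1, p-1)` edges of size `p`, each present
with probability `α_p N / C(N, p)`, so given the past `E|I_{t+1}| ≤ λ |I_t|` and, using that
distinct edges are independent, `E|I_{t+1}|² ≤ λ² |I_t|² + (λ + λ') |I_t|`, where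
`λ + λ' = Σ_p p (p-1)² α_p`. Both bounds then follow by induction on `t`. -/

open Function

section Bernoulli

lemma berBool_singleton (p : ℝ) (b : Bool) :
    berBool p {b} = ENNReal.ofReal (if b then p else 1 - p) := by
  cases b <;>
    simp [berBool, Measure.dirac_apply' _ (MeasurableSet.singleton _)]

lemma isProbabilityMeasure_berBool {p : ℝ} (h0 : 0 ≤ p) (h1 : p ≤ 1) :
    IsProbabilityMeasure (berBool p) := by
  constructor
  simp [berBool, ← ENNReal.ofReal_add h0 (sub_nonneg.2 h1)]

variable {ι : Type*} [Fintype ι] [DecidableEq ι]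

def bernoulliWeight (q : ι → ℝ) (g : ι → Bool) : ℝ :=
  ∏ e, if g e then q e else 1 - q e

lemma integral_pi_berBool {q : ι → ℝ} (hq0 : ∀ e, 0 ≤ q e) (hq1 : ∀ e, q e ≤ 1)
    (F : (ι → Bool) → ℝ) :
    ∫ g, F g ∂Measure.pi (fun e => berBool (q e)) = ∑ g, bernoulliWeight q g * F g := by
  rw [integral_fintype .of_finite]
  refine sum_congr rfl fun g _ => ?_
  rw [measureReal_def, ← Set.univ_pi_singleton g, Measure.pi_pi, ENNReal.toReal_prod,
    smul_eq_mul, bernoulliWeight]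
  congr 1
  refine prod_congr rfl fun e _ => ?_
  rw [berBool_singleton, ENNReal.toReal_ofReal]
  split <;> linarith [hq0 e, hq1 e]

lemma sum_eq_sum_filter_add_update (e : ι) (H : (ι → Bool) → ℝ) :
    ∑ g, H g = ∑ g with g e = true, (H g + H (update g e false)) := by
  rw [sum_add_distrib, ← sum_filter_add_sum_filter_not univ (fun g => g e = true) H]
  congr 1
  refine sum_nbij' (update · e true) (update · e false) ?_ ?_ ?_ ?_ fun g hg => ?_
  · simp
  · simp
  · intro g hg; simp_all [update_idem]
  · intro g hg; simp_all [update_idem]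
  · rw [update_idem, ← (by simpa using hg : g e = false), update_eq_self]

lemma sum_bernoulliWeight_mul_ite (q : ι → ℝ) (e : ι) {G : (ι → Bool) → ℝ}
    (hG : ∀ g b, G (update g e b) = G g) :
    ∑ g, bernoulliWeight q g * (if g e then G g else 0) =
      q e * ∑ g, bernoulliWeight q g * G g := by
  have hweight : ∀ g b, bernoulliWeight q (update g e b) =
      (if b then q e else 1 - q e) * ∏ f ∈ univ.erase e, if g f then q f else 1 - q f := by
    intro g b
    rw [bernoulliWeight, ← mul_prod_erase univ _ (mem_univ e), update_self]
    congr 1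
    exact prod_congr rfl fun f hf => by rw [update_of_ne (ne_of_mem_erase hf)]
  rw [sum_eq_sum_filter_add_update e, sum_eq_sum_filter_add_update e, mul_sum]
  refine sum_congr rfl fun g hg => ?_
  have hge : g e = true := (mem_filter.mp hg).2
  have hw := hweight g true
  rw [← hge, update_eq_self] at hw
  simp only [hw, hweight g false, hG, update_self, hge, ↓reduceIte,
    Bool.false_eq_true, mul_zero, add_zero]
  ring

lemma integral_pi_berBool_ite_of_update {q : ι → ℝ} (hq0 : ∀ e, 0 ≤ q e) (hq1 : ∀ e, q e ≤ 1)
    (e : ι) {G : (ι → Bool) → ℝ} (hG : ∀ g b, G (update g e b) = G g) :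
    ∫ g, (if g e then G g else 0) ∂Measure.pi (fun e => berBool (q e)) =
      q e * ∫ g, G g ∂Measure.pi (fun e => berBool (q e)) := by
  rw [integral_pi_berBool hq0 hq1, integral_pi_berBool hq0 hq1, sum_bernoulliWeight_mul_ite q e hG]

end Bernoulli

section Exploration

abbrev ExploreState (N : ℕ) :=
  Finset (Fin N) × Finset (Fin N) × Finset (Fin N) × Finset (Finset (Fin N))

variable {N : ℕ} (E : Finset (Finset (Fin N))) (i : Fin N)

lemma Iset_succ (t : ℕ) :
    Iset E i (t + 1) = (E.filter fun e => (e ∩ (explore E i t).2.1).Nonempty ∧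
      e ∩ (explore E i t).1 = ∅).biUnion fun e => e ∩ (explore E i t).2.2.1 := rfl

lemma explore_inter_eq_empty (t : ℕ) : (explore E i t).2.1 ∩ (explore E i t).2.2.1 = ∅ := by
  cases t with
  | zero => simp [explore]
  | succ t => exact inter_sdiff_self _ _

variable {E} in
lemma explore_congr {E' : Finset (Finset (Fin N))} (t : ℕ)
    (h : ∀ f, (f ∩ (explore E i t).1).Nonempty → (f ∈ E ↔ f ∈ E')) :
    explore E i t = explore E' i t := by
  induction t with
  | zero => rfl
  | succ t ih =>
    have hR := fun f (hf : (f ∩ (explore E i t).1).Nonempty) =>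
      h f (hf.mono (inter_subset_inter_left subset_union_left))
    have hI := fun f (hf : (f ∩ (explore E i t).2.1).Nonempty) =>
      h f (hf.mono (inter_subset_inter_left subset_union_right))
    have hnew : E.filter (fun e => (e ∩ (explore E i t).2.1).Nonempty ∧ e ∩ (explore E i t).1 = ∅)
        = E'.filter (fun e => (e ∩ (explore E i t).2.1).Nonempty ∧ e ∩ (explore E i t).1 = ∅) := by
      ext f
      simp only [mem_filter, and_congr_left_iff]
      exact fun hf => hI f hf.1
    rw [explore, explore, ← ih hR, hnew]

-- For `P = (R_t, I_t, S_t, E_t)`, the number of vertices that `e` adds to `I_{t+1}` if it is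
-- present in the hypergraph.
def frontierCount (P : ExploreState N) (e : Finset (Fin N)) : ℕ :=
  if (e ∩ P.2.1).Nonempty ∧ e ∩ P.1 = ∅ then #(e ∩ P.2.2.1) else 0

lemma card_Iset_succ_le (t : ℕ) :
    #(Iset E i (t + 1)) ≤ ∑ e ∈ E, frontierCount (explore E i t) e := by
  rw [Iset_succ]
  exact card_biUnion_le.trans_eq (sum_filter _ _)

variable {E} in
lemma explore_eq_of_agree {E' : Finset (Finset (Fin N))} {e : Finset (Fin N)}
    (h : ∀ f ≠ e, f ∈ E ↔ f ∈ E') {t : ℕ} (he : e ∩ (explore E i t).1 = ∅) :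
    explore E i t = explore E' i t :=
  explore_congr i t fun f hf => h f (by rintro rfl; simp [he] at hf)

variable {E} in
lemma frontierCount_mul_eq_of_agree {E' : Finset (Finset (Fin N))} {e : Finset (Fin N)}
    (h : ∀ f ≠ e, f ∈ E ↔ f ∈ E') (t : ℕ) (K : ExploreState N → ℝ) :
    (frontierCount (explore E i t) e : ℝ) * K (explore E i t) =
      frontierCount (explore E' i t) e * K (explore E' i t) := by
  by_cases he : e ∩ (explore E i t).1 = ∅
  · rw [explore_eq_of_agree i h he]
  by_cases he' : e ∩ (explore E' i t).1 = ∅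
  · rw [explore_eq_of_agree i (fun f hf => (h f hf).symm) he']
  simp [frontierCount, he, he']

end Exploration

section Counting

variable {N : ℕ}

lemma card_filter_mem_card_eq_le (v : Fin N) (p : ℕ) :
    #{e : Finset (Fin N) | v ∈ e ∧ #e = p} ≤ (N - 1).choose (p - 1) := by
  have hmaps : ∀ e ∈ ({e : Finset (Fin N) | v ∈ e ∧ #e = p} : Finset _),
      e.erase v ∈ powersetCard (p - 1) (univ.erase v) := by
    intro e he
    obtain ⟨hv, rfl⟩ := (mem_filter.mp he).2
    exact mem_powersetCard.mpr ⟨erase_subset_erase v (subset_univ e), card_erase_of_mem hv⟩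
  have hinj : Set.InjOn (fun e : Finset (Fin N) => e.erase v)
      ({e : Finset (Fin N) | v ∈ e ∧ #e = p} : Finset _) := by
    intro e₁ h₁ e₂ h₂ h
    simp only [coe_filter, mem_univ, true_and, Set.mem_ofPred_eq] at h₁ h₂
    rw [← insert_erase h₁.1, ← insert_erase h₂.1]
    exact congrArg _ h
  simpa using card_le_card_of_injOn _ hmaps hinj

lemma choose_pred_mul_div_choose_le {a : ℝ} (ha : 0 ≤ a) {N p : ℕ} (hN : 0 < N) (hp : 0 < p) :
    ((N - 1).choose (p - 1) : ℝ) * (a * N / N.choose p) ≤ p * a := by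
  rcases le_or_gt p N with hpN | hNp
  · have hid : (N.choose p : ℝ) * p = N * (N - 1).choose (p - 1) := by
      have := Nat.add_one_mul_choose_eq (N - 1) (p - 1)
      rw [Nat.sub_add_cancel hN, Nat.sub_add_cancel hp] at this
      exact_mod_cast this.symm
    have hpos : (0 : ℝ) < N.choose p := by exact_mod_cast Nat.choose_pos hpN
    rw [mul_div_assoc', div_le_iff₀ hpos]
    nlinarith
  · rw [Nat.choose_eq_zero_of_lt (by omega : N - 1 < p - 1)]
    simp only [Nat.cast_zero, zero_mul]
    positivity

variable {α : ℕ → ℝ} {Δ : ℕ} (hα : ∀ p, 2 ≤ p → p ≤ Δ → 0 ≤ α p)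
include hα

lemma edgeProb_nonneg (e : Finset (Fin N)) : 0 ≤ edgeProb α Δ N e := by
  unfold edgeProb
  split_ifs with h
  · exact div_nonneg (mul_nonneg (hα _ h.1 h.2) N.cast_nonneg) (Nat.cast_nonneg _)
  · exact le_rfl

lemma sum_edgeProb_mem_le (v : Fin N) {φ : ℕ → ℝ} (hφ : ∀ p, 2 ≤ p → 0 ≤ φ p) :
    ∑ e with v ∈ e, edgeProb α Δ N e * φ #e ≤ ∑ p ∈ Icc 2 Δ, p * α p * φ p := by
  have hsplit : ∀ e : Finset (Fin N), edgeProb α Δ N e * φ #e =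
      ∑ p ∈ Icc 2 Δ, if #e = p then α p * N / N.choose p * φ p else 0 := by
    intro e
    simp only [sum_ite_eq, edgeProb, mem_Icc, ite_mul, zero_mul]
  simp_rw [hsplit]
  rw [sum_comm]
  refine sum_le_sum fun p hp => ?_
  obtain ⟨hp2, hpΔ⟩ := mem_Icc.mp hp
  have hc : 0 ≤ α p * N / N.choose p * φ p :=
    mul_nonneg (div_nonneg (mul_nonneg (hα p hp2 hpΔ) N.cast_nonneg) (Nat.cast_nonneg _))
      (hφ p hp2)
  rw [← sum_filter, sum_const, filter_filter, nsmul_eq_mul]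
  calc (#{e : Finset (Fin N) | v ∈ e ∧ #e = p} : ℝ) * (α p * N / N.choose p * φ p)
      ≤ (N - 1).choose (p - 1) * (α p * N / N.choose p * φ p) :=
        mul_le_mul_of_nonneg_right (by exact_mod_cast card_filter_mem_card_eq_le v p) hc
    _ = (N - 1).choose (p - 1) * (α p * N / N.choose p) * φ p := by ring
    _ ≤ p * α p * φ p :=
        mul_le_mul_of_nonneg_right
          (choose_pred_mul_div_choose_le (hα p hp2 hpΔ) v.pos (by omega)) (hφ p hp2)

lemma edgeProb_mul_frontierCount_pow_le (P : ExploreState N) (hIS : P.2.1 ∩ P.2.2.1 = ∅)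
    {m : ℕ} (hm : m ≠ 0) (e : Finset (Fin N)) :
    edgeProb α Δ N e * (frontierCount P e : ℝ) ^ m ≤
      ∑ v ∈ P.2.1, if v ∈ e then edgeProb α Δ N e * ((#e : ℝ) - 1) ^ m else 0 := by
  unfold frontierCount
  split_ifs with hfe
  · obtain ⟨v, hv⟩ := hfe.1
    obtain ⟨hve, hvI⟩ := mem_inter.mp hv
    have hsub : e ∩ P.2.2.1 ⊆ e.erase v := fun w hw => mem_erase.mpr
      ⟨by rintro rfl; simpa [hIS] using mem_inter.mpr ⟨hvI, (mem_inter.mp hw).2⟩,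
        (mem_inter.mp hw).1⟩
    have hcard : (#(e ∩ P.2.2.1) : ℝ) ≤ #e - 1 := by
      have := card_le_card hsub
      rw [card_erase_of_mem hve] at this
      have h1 : 1 ≤ #e := card_pos.mpr ⟨v, hve⟩
      exact le_sub_iff_add_le.mpr (by exact_mod_cast Nat.add_le_of_le_sub h1 this)
    have hI : (1 : ℝ) ≤ #(P.2.1 ∩ e) := by
      exact_mod_cast card_pos.mpr ⟨v, by rwa [inter_comm]⟩
    rw [sum_ite_mem, sum_const, nsmul_eq_mul]
    calc edgeProb α Δ N e * (#(e ∩ P.2.2.1) : ℝ) ^ m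
        ≤ edgeProb α Δ N e * ((#e : ℝ) - 1) ^ m :=
          mul_le_mul_of_nonneg_left (pow_le_pow_left₀ (Nat.cast_nonneg _) hcard m)
            (edgeProb_nonneg hα e)
      _ ≤ #(P.2.1 ∩ e) * (edgeProb α Δ N e * ((#e : ℝ) - 1) ^ m) :=
          le_mul_of_one_le_left (mul_nonneg (edgeProb_nonneg hα e)
            (pow_nonneg ((Nat.cast_nonneg _).trans hcard) m)) hI
  · rw [Nat.cast_zero, zero_pow hm, mul_zero]
    refine sum_nonneg fun v _ => ?_
    split_ifs with hv
    · have : (1 : ℝ) ≤ #e := by exact_mod_cast card_pos.mpr ⟨v, hv⟩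
      exact mul_nonneg (edgeProb_nonneg hα e) (pow_nonneg (by linarith) m)
    · exact le_rfl

lemma sum_edgeProb_mul_frontierCount_pow_le (P : ExploreState N)
    (hIS : P.2.1 ∩ P.2.2.1 = ∅) {m : ℕ} (hm : m ≠ 0) :
    ∑ e, edgeProb α Δ N e * (frontierCount P e : ℝ) ^ m ≤
      (∑ p ∈ Icc 2 Δ, p * α p * ((p : ℝ) - 1) ^ m) * #P.2.1 := by
  calc ∑ e, edgeProb α Δ N e * (frontierCount P e : ℝ) ^ m
      ≤ ∑ e, ∑ v ∈ P.2.1, if v ∈ e then edgeProb α Δ N e * ((#e : ℝ) - 1) ^ m else 0 :=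
        sum_le_sum fun e _ => edgeProb_mul_frontierCount_pow_le hα P hIS hm e
    _ = ∑ v ∈ P.2.1, ∑ e with v ∈ e, edgeProb α Δ N e * ((#e : ℝ) - 1) ^ m := by
        rw [sum_comm]
        simp only [sum_filter]
    _ ≤ ∑ _v ∈ P.2.1, ∑ p ∈ Icc 2 Δ, p * α p * ((p : ℝ) - 1) ^ m :=
        sum_le_sum fun v _ => sum_edgeProb_mem_le hα v (φ := fun p => ((p : ℝ) - 1) ^ m) fun p hp =>
          pow_nonneg (by linarith [(Nat.ofNat_le_cast.mpr hp : (2 : ℝ) ≤ p)]) m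
    _ = _ := by rw [sum_const, nsmul_eq_mul, mul_comm]

lemma sum_edgeProb_mul_frontierCount_le (i : Fin N)
    (E : Finset (Finset (Fin N))) (t : ℕ) :
    ∑ e, edgeProb α Δ N e * (frontierCount (explore E i t) e : ℝ) ≤
      lamMix α Δ * #(Iset E i t) := by
  have := sum_edgeProb_mul_frontierCount_pow_le hα _ (explore_inter_eq_empty E i t) one_ne_zero
  simp only [pow_one] at this
  refine this.trans_eq ?_
  rw [lamMix, Iset]
  congr 1
  exact sum_congr rfl fun p _ => by ring

lemma sum_edgeProb_mul_frontierCount_sq_le (i : Fin N)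
    (E : Finset (Finset (Fin N))) (t : ℕ) :
    ∑ e, edgeProb α Δ N e * (frontierCount (explore E i t) e : ℝ) ^ 2 ≤
      (lamMix α Δ + lamMix' α Δ) * #(Iset E i t) := by
  refine (sum_edgeProb_mul_frontierCount_pow_le hα _ (explore_inter_eq_empty E i t)
    two_ne_zero).trans_eq ?_
  rw [lamMix, lamMix', Iset, ← sum_add_distrib]
  congr 1
  exact sum_congr rfl fun p _ => by ring

end Counting

lemma sum_sum_mul_add_ite_mul_mul {ι : Type*} [Fintype ι] [DecidableEq ι] (a x : ι → ℝ) :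
    ∑ e, ∑ f, (a e * a f + if e = f then a e else 0) * (x e * x f) =
      (∑ e, a e * x e) ^ 2 + ∑ e, a e * x e ^ 2 := by
  simp only [add_mul, sum_add_distrib, ite_mul, zero_mul, sum_ite_eq, mem_univ, if_true, sq,
    sum_mul_sum]
  congr 1
  exact sum_congr rfl fun e _ => sum_congr rfl fun f _ => by ring

section Moments

variable {α : ℕ → ℝ} {Δ N : ℕ}

instance isFiniteMeasure_graphMeasure : IsFiniteMeasure (graphMeasure α Δ N) := by
  unfold graphMeasure; infer_instance

lemma edgeProb_le_one (hsize : ∀ p, 2 ≤ p → p ≤ Δ → α p * N ≤ (N.choose p : ℝ))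
    (e : Finset (Fin N)) : edgeProb α Δ N e ≤ 1 := by
  unfold edgeProb
  split_ifs with h
  · have hpos : (0 : ℝ) < N.choose #e := by
      exact_mod_cast Nat.choose_pos (by simpa using e.card_le_univ)
    exact (div_le_one hpos).mpr (hsize _ h.1 h.2)
  · exact zero_le_one

lemma mem_edgesOf_update_iff {g : Finset (Fin N) → Bool} {e f : Finset (Fin N)} (hf : f ≠ e)
    (b : Bool) : f ∈ edgesOf Δ (update g e b) ↔ f ∈ edgesOf Δ g := by
  simp [edgesOf, update_of_ne hf]

variable (i : Fin N)

lemma frontierCount_mul_update (t : ℕ) (g : Finset (Fin N) → Bool) (e : Finset (Fin N))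
    (b : Bool) (K : ExploreState N → ℝ) :
    (frontierCount (explore (edgesOf Δ (update g e b)) i t) e : ℝ) *
        K (explore (edgesOf Δ (update g e b)) i t) =
      frontierCount (explore (edgesOf Δ g) i t) e * K (explore (edgesOf Δ g) i t) :=
  frontierCount_mul_eq_of_agree i (fun _ hf => mem_edgesOf_update_iff hf b) t K

lemma card_Iset_succ_le_sum_ite (t : ℕ) (g : Finset (Fin N) → Bool) :
    (#(Iset (edgesOf Δ g) i (t + 1)) : ℝ) ≤
      ∑ e, if g e then (frontierCount (explore (edgesOf Δ g) i t) e : ℝ) else 0 := by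
  rw [← sum_filter]
  calc (#(Iset (edgesOf Δ g) i (t + 1)) : ℝ)
      ≤ ∑ e ∈ edgesOf Δ g, (frontierCount (explore (edgesOf Δ g) i t) e : ℝ) := by
        exact_mod_cast card_Iset_succ_le _ i t
    _ ≤ _ := sum_le_sum_of_subset_of_nonneg
        (fun e he => by simp_all [edgesOf]) fun _ _ _ => Nat.cast_nonneg _

variable (hα : ∀ p, 2 ≤ p → p ≤ Δ → 0 ≤ α p)
  (hsize : ∀ p, 2 ≤ p → p ≤ Δ → α p * N ≤ (N.choose p : ℝ))
include hα hsize

lemma integral_graphMeasure_ite_of_update (e : Finset (Fin N))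
    {G : (Finset (Fin N) → Bool) → ℝ} (hG : ∀ g b, G (update g e b) = G g) :
    ∫ g, (if g e then G g else 0) ∂graphMeasure α Δ N =
      edgeProb α Δ N e * ∫ g, G g ∂graphMeasure α Δ N :=
  integral_pi_berBool_ite_of_update (edgeProb_nonneg hα) (edgeProb_le_one hsize) e hG

lemma integral_ite_mul_ite_frontierCount_le (t : ℕ) (e f : Finset (Fin N)) :
    ∫ g, (if g e then (frontierCount (explore (edgesOf Δ g) i t) e : ℝ) else 0) *
        (if g f then (frontierCount (explore (edgesOf Δ g) i t) f : ℝ) else 0)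
        ∂graphMeasure α Δ N ≤
      (edgeProb α Δ N e * edgeProb α Δ N f + if e = f then edgeProb α Δ N e else 0) *
        ∫ g, (frontierCount (explore (edgesOf Δ g) i t) e : ℝ) *
          frontierCount (explore (edgesOf Δ g) i t) f ∂graphMeasure α Δ N := by
  by_cases hef : e = f
  · subst hef
    simp_rw [ite_zero_mul_ite_zero, and_self]
    rw [integral_graphMeasure_ite_of_update hα hsize e fun g b => ?_, if_pos trivial]
    · have hint : 0 ≤ ∫ g, (frontierCount (explore (edgesOf Δ g) i t) e : ℝ) *
          frontierCount (explore (edgesOf Δ g) i t) e ∂graphMeasure α Δ N :=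
        integral_nonneg fun g => by positivity
      exact mul_le_mul_of_nonneg_right (le_add_of_nonneg_left (mul_self_nonneg _)) hint
    · exact frontierCount_mul_update i t g e b (frontierCount · e)
  · -- Resample `e` (the indicator of `f ≠ e` does not see it), then `f`.
    simp_rw [ite_mul, zero_mul]
    rw [integral_graphMeasure_ite_of_update hα hsize e fun g b => ?_]
    · simp_rw [mul_ite, mul_zero]
      rw [integral_graphMeasure_ite_of_update hα hsize f fun g b => ?_, if_neg hef, add_zero,
        mul_assoc]
      rw [mul_comm, frontierCount_mul_update i t g f b (frontierCount · e), mul_comm]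
    · rw [update_of_ne (Ne.symm hef)]
      exact frontierCount_mul_update i t g e b fun P => if g f then (frontierCount P f : ℝ) else 0

lemma integral_card_Iset_succ_le (t : ℕ) :
    ∫ g, (#(Iset (edgesOf Δ g) i (t + 1)) : ℝ) ∂graphMeasure α Δ N ≤
      lamMix α Δ * ∫ g, (#(Iset (edgesOf Δ g) i t) : ℝ) ∂graphMeasure α Δ N := by
  calc ∫ g, (#(Iset (edgesOf Δ g) i (t + 1)) : ℝ) ∂graphMeasure α Δ N
      ≤ ∫ g, ∑ e, (if g e then (frontierCount (explore (edgesOf Δ g) i t) e : ℝ) else 0)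
          ∂graphMeasure α Δ N :=
        integral_mono .of_finite .of_finite (card_Iset_succ_le_sum_ite i t)
    _ = ∑ e, edgeProb α Δ N e *
          ∫ g, (frontierCount (explore (edgesOf Δ g) i t) e : ℝ) ∂graphMeasure α Δ N := by
        rw [integral_finsetSum _ fun _ _ => .of_finite]
        refine sum_congr rfl fun e _ => integral_graphMeasure_ite_of_update hα hsize e
          fun g b => by simpa using frontierCount_mul_update i t g e b 1
    _ = ∫ g, ∑ e, edgeProb α Δ N e * (frontierCount (explore (edgesOf Δ g) i t) e : ℝ)
          ∂graphMeasure α Δ N := by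
        simp_rw [integral_finsetSum _ fun _ _ => .of_finite, integral_const_mul]
    _ ≤ ∫ g, lamMix α Δ * (#(Iset (edgesOf Δ g) i t) : ℝ) ∂graphMeasure α Δ N :=
        integral_mono .of_finite .of_finite fun g =>
          sum_edgeProb_mul_frontierCount_le hα i (edgesOf Δ g) t
    _ = _ := integral_const_mul _ _

lemma integral_card_Iset_succ_sq_le (t : ℕ) :
    ∫ g, (#(Iset (edgesOf Δ g) i (t + 1)) : ℝ) ^ 2 ∂graphMeasure α Δ N ≤
      lamMix α Δ ^ 2 * ∫ g, (#(Iset (edgesOf Δ g) i t) : ℝ) ^ 2 ∂graphMeasure α Δ N +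
        (lamMix α Δ + lamMix' α Δ) * ∫ g, (#(Iset (edgesOf Δ g) i t) : ℝ) ∂graphMeasure α Δ N := by
  calc ∫ g, (#(Iset (edgesOf Δ g) i (t + 1)) : ℝ) ^ 2 ∂graphMeasure α Δ N
      ≤ ∫ g, (∑ e, if g e then (frontierCount (explore (edgesOf Δ g) i t) e : ℝ) else 0) ^ 2
          ∂graphMeasure α Δ N :=
        integral_mono .of_finite .of_finite fun g =>
          pow_le_pow_left₀ (Nat.cast_nonneg _) (card_Iset_succ_le_sum_ite i t g) 2
    _ = ∑ e, ∑ f, ∫ g, (if g e then (frontierCount (explore (edgesOf Δ g) i t) e : ℝ) else 0) *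
          (if g f then (frontierCount (explore (edgesOf Δ g) i t) f : ℝ) else 0)
          ∂graphMeasure α Δ N := by
        simp_rw [sq, sum_mul_sum, integral_finsetSum _ fun _ _ => .of_finite]
    _ ≤ ∑ e, ∑ f, (edgeProb α Δ N e * edgeProb α Δ N f + if e = f then edgeProb α Δ N e else 0) *
          ∫ g, (frontierCount (explore (edgesOf Δ g) i t) e : ℝ) *
            frontierCount (explore (edgesOf Δ g) i t) f ∂graphMeasure α Δ N :=
        sum_le_sum fun e _ => sum_le_sum fun f _ =>
          integral_ite_mul_ite_frontierCount_le i hα hsize t e f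
    _ = ∫ g, (∑ e, edgeProb α Δ N e * (frontierCount (explore (edgesOf Δ g) i t) e : ℝ)) ^ 2 +
          ∑ e, edgeProb α Δ N e * (frontierCount (explore (edgesOf Δ g) i t) e : ℝ) ^ 2
          ∂graphMeasure α Δ N := by
        simp_rw [← sum_sum_mul_add_ite_mul_mul, integral_finsetSum _ fun _ _ => .of_finite,
          integral_const_mul]
    _ ≤ ∫ g, (lamMix α Δ * (#(Iset (edgesOf Δ g) i t) : ℝ)) ^ 2 +
          (lamMix α Δ + lamMix' α Δ) * (#(Iset (edgesOf Δ g) i t) : ℝ) ∂graphMeasure α Δ N :=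
        integral_mono .of_finite .of_finite fun g => add_le_add
          (pow_le_pow_left₀ (sum_nonneg fun e _ => mul_nonneg (edgeProb_nonneg hα e)
            (Nat.cast_nonneg _)) (sum_edgeProb_mul_frontierCount_le hα i (edgesOf Δ g) t) 2)
          (sum_edgeProb_mul_frontierCount_sq_le hα i (edgesOf Δ g) t)
    _ = _ := by
        simp_rw [mul_pow]
        rw [integral_add .of_finite .of_finite, integral_const_mul, integral_const_mul]

end Moments

section PowerSums

lemma sum_Ico_succ_two_mul_succ_pow_pred (L : ℝ) (t : ℕ) :
    ∑ k ∈ Ico (t + 1) (2 * (t + 1)), L ^ (k - 1) = ∑ k ∈ Icc t (2 * t), L ^ k := by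
  rw [← Ico_add_one_right_eq_Icc, show 2 * (t + 1) = 2 * t + 1 + 1 by ring, ← sum_Ico_add']
  simp

lemma sum_Icc_two_mul_pow (L : ℝ) (t : ℕ) :
    ∑ k ∈ Icc t (2 * t), L ^ k = L ^ t + L ^ 2 * ∑ k ∈ Ico t (2 * t), L ^ (k - 1) := by
  cases t with
  | zero => simp
  | succ t =>
    rw [sum_Ico_succ_two_mul_succ_pow_pred, mul_sum, ← insert_Icc_add_one_left_eq_Icc (by omega),
      sum_insert (by simp), ← Ico_add_one_right_eq_Icc, ← Ico_add_one_right_eq_Icc,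
      show 2 * (t + 1) + 1 = 2 * t + 1 + 2 by ring, show t + 1 + 1 = t + 2 from rfl,
      ← sum_Ico_add' _ t (2 * t + 1) 2]
    simp_rw [pow_add, mul_comm]

lemma secondMomentBound_succ (L L' : ℝ) (t : ℕ) :
    (∑ k ∈ Icc (t + 1) (2 * (t + 1)), L ^ k) + L' * ∑ k ∈ Ico (t + 1) (2 * (t + 1)), L ^ (k - 1)
      = L ^ 2 * ((∑ k ∈ Icc t (2 * t), L ^ k) + L' * ∑ k ∈ Ico t (2 * t), L ^ (k - 1)) +
        (L + L') * L ^ t := by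
  rw [sum_Icc_two_mul_pow L (t + 1), sum_Ico_succ_two_mul_succ_pow_pred,
    sum_Icc_two_mul_pow L t]
  ring

end PowerSums

section Bounds

variable {α : ℕ → ℝ} {Δ N : ℕ} (i : Fin N) (hα : ∀ p, 2 ≤ p → p ≤ Δ → 0 ≤ α p)
include hα

lemma lamMix_nonneg : 0 ≤ lamMix α Δ :=
  sum_nonneg fun p hp => by
    obtain ⟨h2, hΔ⟩ := mem_Icc.mp hp
    have : (2 : ℝ) ≤ p := by exact_mod_cast h2
    exact mul_nonneg (mul_nonneg (by linarith) (by linarith)) (hα p h2 hΔ)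

lemma lamMix'_nonneg : 0 ≤ lamMix' α Δ :=
  sum_nonneg fun p hp => by
    obtain ⟨h2, hΔ⟩ := mem_Icc.mp hp
    have : (2 : ℝ) ≤ p := by exact_mod_cast h2
    exact mul_nonneg (mul_nonneg (mul_nonneg (by linarith) (by linarith)) (by linarith))
      (hα p h2 hΔ)

variable (hsize : ∀ p, 2 ≤ p → p ≤ Δ → α p * N ≤ (N.choose p : ℝ))
include hsize

lemma isProbabilityMeasure_graphMeasure : IsProbabilityMeasure (graphMeasure α Δ N) := by
  have := fun e => isProbabilityMeasure_berBool (edgeProb_nonneg hα e) (edgeProb_le_one hsize e)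
  unfold graphMeasure
  infer_instance

theorem integral_card_Iset_le (t : ℕ) :
    ∫ g, (#(Iset (edgesOf Δ g) i t) : ℝ) ∂graphMeasure α Δ N ≤ lamMix α Δ ^ t := by
  have := isProbabilityMeasure_graphMeasure hα hsize
  induction t with
  | zero => simp [Iset, explore]
  | succ t ih =>
    rw [pow_succ']
    exact (integral_card_Iset_succ_le i hα hsize t).trans
      (mul_le_mul_of_nonneg_left ih (lamMix_nonneg hα))

theorem integral_card_Iset_sq_le (t : ℕ) :
    ∫ g, (#(Iset (edgesOf Δ g) i t) : ℝ) ^ 2 ∂graphMeasure α Δ N ≤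
      (∑ k ∈ Icc t (2 * t), lamMix α Δ ^ k) +
        lamMix' α Δ * ∑ k ∈ Ico t (2 * t), lamMix α Δ ^ (k - 1) := by
  have := isProbabilityMeasure_graphMeasure hα hsize
  induction t with
  | zero => simp [Iset, explore]
  | succ t ih =>
    rw [secondMomentBound_succ]
    exact (integral_card_Iset_succ_sq_le i hα hsize t).trans (add_le_add
      (mul_le_mul_of_nonneg_left ih (sq_nonneg _))
      (mul_le_mul_of_nonneg_left (integral_card_Iset_le i hα hsize t)
        (add_nonneg (lamMix_nonneg hα) (lamMix'_nonneg hα))))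

end Bounds

theorem stmt10_general (Δ : ℕ) (α : ℕ → ℝ)
    (hα : ∀ p, 2 ≤ p → p ≤ Δ → 0 < α p)
    (N : ℕ)
    (hsize : ∀ p, 2 ≤ p → p ≤ Δ → α p * N ≤ (N.choose p : ℝ))
    (i : Fin N) (t : ℕ) :
    (∫ g, ((Iset (edgesOf Δ g) i t).card : ℝ) ∂graphMeasure α Δ N) ≤ lamMix α Δ ^ t ∧
      (∫ g, ((Iset (edgesOf Δ g) i t).card : ℝ) ^ 2 ∂graphMeasure α Δ N)
        ≤ (∑ k ∈ Finset.Icc t (2 * t), lamMix α Δ ^ k) +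
            lamMix' α Δ * ∑ k ∈ Finset.Ico t (2 * t), lamMix α Δ ^ (k - 1) := by
  have hα' : ∀ p, 2 ≤ p → p ≤ Δ → 0 ≤ α p := fun p h2 hΔ => (hα p h2 hΔ).le
  exact ⟨integral_card_Iset_le i hα' hsize t, integral_card_Iset_sq_le i hα' hsize t⟩

/-- Growth estimates for the exploration process of the diluted mixed
`p`-spin random hypergraph: `E|I_t| ≤ λ^t` and
`E|I_t|² ≤ Σ_{k=t}^{2t} λ^k + λ' Σ_{k=t-1}^{2(t-1)} λ^k` (empty sums being `0`). -/
theorem stmt10 (Δ : ℕ) (hΔ : 2 ≤ Δ) (α : ℕ → ℝ)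
    (hα : ∀ p, 2 ≤ p → p ≤ Δ → 0 < α p)
    (N : ℕ) (hN : 1 ≤ N)
    (hsize : ∀ p, 2 ≤ p → p ≤ Δ → α p * N ≤ (N.choose p : ℝ))
    (i : Fin N) (t : ℕ) :
    (∫ g, ((Iset (edgesOf Δ g) i t).card : ℝ) ∂graphMeasure α Δ N) ≤ lamMix α Δ ^ t ∧
      (∫ g, ((Iset (edgesOf Δ g) i t).card : ℝ) ^ 2 ∂graphMeasure α Δ N)
        ≤ (∑ k ∈ Finset.Icc t (2 * t), lamMix α Δ ^ k) +
            lamMix' α Δ * ∑ k ∈ Finset.Ico t (2 * t), lamMix α Δ ^ (k - 1) :=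
  stmt10_general Δ α hα N hsize i t
end
end
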